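/- Let G = (V,E) be a connected finite simple graph on n ≥ 2 vertices and let u ≠ v be two vertices with degrees d(u) and d(v). Then (1/2)·(1/d(u) + 1/d(v)) ≤ R_G(u,v) ≤ (1/λ₂(L̃_G))·(1/d(u) + 1/d(v)), where λ₂(L̃_G) > 0 is the second-smallest eigenvalue of the normalized Laplacian L̃_G = D_G^{-1/2} (D_G − A_G) D_G^{-1/2}. -/

import Mathlib

/-
The lower bound needs only two test potentials: the indicator of `u` and one minus the
indicator of `v` are admissible with energies `d(u)` and `d(v)`, so the minimal energy is at
most `min (d u) (d v)`.

For the upper bound, subtracting the degree-weighted mean from an admissible `φ` gives `ψ` with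
the same energy and `∑ d ψ = 0`. Then `x = D^{1/2} ψ` is orthogonal to `D^{1/2} 𝟙`, which spans
the kernel of `L̃` because `G` is connected, so
`energy φ = xᵀ L̃ x ≥ λ₂ ‖x‖² ≥ λ₂ (d(u) ψ(u)² + d(v) ψ(v)²) ≥ λ₂ d(u) d(v) / (d(u) + d(v))`,
the last step because `ψ u - ψ v = 1`.
-/

open Matrix

/-- The eigenvalues of a real symmetric matrix, listed in non-decreasing order
(with multiplicity); junk value `0` if the matrix is not symmetric. -/
noncomputable def sortedEigenvalues {n : ℕ} (M : Matrix (Fin n) (Fin n) ℝ) : Fin n → ℝ :=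
  if h : M.IsHermitian then h.eigenvalues ∘ Tuple.sort h.eigenvalues else 0

open Classical in
/-- The Dirichlet energy `Σ_{{u,v} ∈ E} (φ u - φ v)²` of a potential `φ`,
written as half the sum over ordered pairs. -/
noncomputable def energy {V : Type*} [Fintype V] (G : SimpleGraph V) (φ : V → ℝ) : ℝ :=
  (1/2) * ∑ u : V, ∑ v : V, if G.Adj u v then (φ u - φ v)^2 else 0

/-- The `s`-`t` effective resistance: the reciprocal of the minimal Dirichlet energy among
potentials with `φ s = 1` and `φ t = 0`. -/
noncomputable def effRes {V : Type*} [Fintype V] (G : SimpleGraph V) (s t : V) : ℝ :=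
  1 / sInf (energy G '' {φ : V → ℝ | φ s = 1 ∧ φ t = 0})

open Classical in
/-- The degree of a vertex, as a real number. -/
noncomputable def deg {V : Type*} [Fintype V] (G : SimpleGraph V) (v : V) : ℝ :=
  (G.degree v : ℝ)

open Classical in
/-- The (real) Laplacian matrix of a graph on `Fin n`. -/
noncomputable def lap {n : ℕ} (G : SimpleGraph (Fin n)) : Matrix (Fin n) (Fin n) ℝ :=
  G.lapMatrix ℝ

/-- The normalized Laplacian `L̃ = D^{-1/2} (D - A) D^{-1/2}`. -/
noncomputable def normLap {n : ℕ} (G : SimpleGraph (Fin n)) : Matrix (Fin n) (Fin n) ℝ :=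
  Matrix.diagonal (fun v => (Real.sqrt (deg G v))⁻¹) * lap G *
    Matrix.diagonal (fun v => (Real.sqrt (deg G v))⁻¹)

lemma OrthonormalBasis.dotProduct_eq_sum {ι : Type*} [Fintype ι]
    (b : OrthonormalBasis ι ℝ (EuclideanSpace ℝ ι)) (x y : ι → ℝ) :
    x ⬝ᵥ y = ∑ i, (b i ⬝ᵥ x) * (b i ⬝ᵥ y) := by
  have h := b.sum_inner_mul_inner (WithLp.toLp 2 x) (WithLp.toLp 2 y)
  simp only [EuclideanSpace.inner_eq_star_dotProduct, star_trivial] at h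
  rw [dotProduct_comm x y, ← h]
  exact Finset.sum_congr rfl fun i _ => by rw [dotProduct_comm y]

lemma OrthonormalBasis.dotProduct_apply_apply {ι : Type*} [Fintype ι] [DecidableEq ι]
    (b : OrthonormalBasis ι ℝ (EuclideanSpace ℝ ι)) (i j : ι) :
    b i ⬝ᵥ b j = if i = j then 1 else 0 := by
  rw [← orthonormal_iff_ite.mp b.orthonormal, EuclideanSpace.inner_eq_star_dotProduct,
    star_trivial, dotProduct_comm]

namespace Matrix.IsHermitian

variable {ι : Type*} [Fintype ι] [DecidableEq ι] {A : Matrix ι ι ℝ}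

lemma eigenvectorBasis_dotProduct_mulVec (hA : A.IsHermitian) (i : ι) (x : ι → ℝ) :
    hA.eigenvectorBasis i ⬝ᵥ (A *ᵥ x) = hA.eigenvalues i * (hA.eigenvectorBasis i ⬝ᵥ x) := by
  rw [dotProduct_mulVec, ← mulVec_transpose, ← conjTranspose_eq_transpose_of_trivial, hA.eq,
    hA.mulVec_eigenvectorBasis, smul_dotProduct, smul_eq_mul]

lemma dotProduct_mulVec_eq_sum (hA : A.IsHermitian) (x : ι → ℝ) :
    x ⬝ᵥ (A *ᵥ x) = ∑ i, hA.eigenvalues i * (hA.eigenvectorBasis i ⬝ᵥ x) ^ 2 := by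
  rw [hA.eigenvectorBasis.dotProduct_eq_sum]
  exact Finset.sum_congr rfl fun i _ => by rw [hA.eigenvectorBasis_dotProduct_mulVec]; ring

lemma exists_eigenvalues_eq_zero (hA : A.IsHermitian) {w : ι → ℝ} (hw : w ≠ 0)
    (hAw : A *ᵥ w = 0) : ∃ i, hA.eigenvalues i = 0 := by
  have hdet : A.det = 0 := exists_mulVec_eq_zero_iff.mp ⟨w, hw, hAw⟩
  simpa [hA.det_eq_prod_eigenvalues, Finset.prod_eq_zero_iff] using hdet

end Matrix.IsHermitian

namespace Matrix

variable {n : ℕ} {A : Matrix (Fin n) (Fin n) ℝ}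

lemma sortedEigenvalues_eq (hA : A.IsHermitian) :
    sortedEigenvalues A = hA.eigenvalues ∘ Tuple.sort hA.eigenvalues :=
  dif_pos hA

lemma IsHermitian.sortedEigenvalues_one_mul_le (hA : A.IsHermitian) (hn : 1 < n)
    {x : Fin n → ℝ}
    (hx : hA.eigenvectorBasis (Tuple.sort hA.eigenvalues ⟨0, by omega⟩) ⬝ᵥ x = 0) :
    sortedEigenvalues A ⟨1, hn⟩ * (x ⬝ᵥ x) ≤ x ⬝ᵥ (A *ᵥ x) := by
  set σ := Tuple.sort hA.eigenvalues
  rw [hA.dotProduct_mulVec_eq_sum, hA.eigenvectorBasis.dotProduct_eq_sum, Finset.mul_sum]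
  refine Finset.sum_le_sum fun i _ => ?_
  rw [← sq]
  obtain rfl | hi := eq_or_ne i (σ ⟨0, by omega⟩)
  · simp [hx]
  · have h1 : (⟨1, hn⟩ : Fin n) ≤ σ.symm i := by
      have : σ.symm i ≠ ⟨0, by omega⟩ := fun h => hi (σ.symm_apply_eq.mp h)
      rw [Fin.le_def]
      exact Nat.one_le_iff_ne_zero.mpr fun h => this (Fin.ext h)
    have := Tuple.monotone_sort hA.eigenvalues h1
    rw [Function.comp_apply, Function.comp_apply, Equiv.apply_symm_apply] at this
    rw [sortedEigenvalues_eq hA, Function.comp_apply]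
    gcongr

variable {w : Fin n → ℝ}

lemma PosSemidef.eigenvalues_sort_zero_eq_zero (hA : A.PosSemidef) (hw : w ≠ 0)
    (hAw : A *ᵥ w = 0) (hn : 0 < n) :
    hA.isHermitian.eigenvalues (Tuple.sort hA.isHermitian.eigenvalues ⟨0, hn⟩) = 0 := by
  obtain ⟨i, hi⟩ := hA.isHermitian.exists_eigenvalues_eq_zero hw hAw
  refine le_antisymm ?_ (hA.eigenvalues_nonneg _)
  set σ := Tuple.sort hA.isHermitian.eigenvalues
  have := Tuple.monotone_sort hA.isHermitian.eigenvalues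
    (show (⟨0, hn⟩ : Fin n) ≤ σ.symm i from Nat.zero_le _)
  rwa [Function.comp_apply, Function.comp_apply, Equiv.apply_symm_apply, hi] at this

lemma IsHermitian.exists_eigenvectorBasis_eq_smul (hA : A.IsHermitian)
    (hker : ∀ y, A *ᵥ y = 0 → ∃ c : ℝ, y = c • w) {i : Fin n} (hi : hA.eigenvalues i = 0) :
    ∃ c : ℝ, (hA.eigenvectorBasis i : Fin n → ℝ) = c • w :=
  hker _ (by rw [hA.mulVec_eigenvectorBasis, hi, zero_smul])

lemma IsHermitian.eq_of_eigenvalues_eq_zero (hA : A.IsHermitian)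
    (hker : ∀ y, A *ᵥ y = 0 → ∃ c : ℝ, y = c • w) {i j : Fin n}
    (hi : hA.eigenvalues i = 0) (hj : hA.eigenvalues j = 0) : i = j := by
  obtain ⟨c, hc⟩ := hA.exists_eigenvectorBasis_eq_smul hker hi
  obtain ⟨d, hd⟩ := hA.exists_eigenvectorBasis_eq_smul hker hj
  have hii := hA.eigenvectorBasis.dotProduct_apply_apply i i
  have hjj := hA.eigenvectorBasis.dotProduct_apply_apply j j
  have hij := hA.eigenvectorBasis.dotProduct_apply_apply i j
  by_contra hne
  simp only [hc, hd, if_true, if_neg hne, smul_dotProduct, dotProduct_smul, smul_eq_mul]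
    at hii hjj hij
  have : (d * (c * (w ⬝ᵥ w))) ^ 2 = c * (c * (w ⬝ᵥ w)) * (d * (d * (w ⬝ᵥ w))) := by ring
  rw [hij, hii, hjj] at this
  norm_num at this

lemma PosSemidef.sortedEigenvalues_one_pos (hA : A.PosSemidef) (hw : w ≠ 0)
    (hAw : A *ᵥ w = 0) (hker : ∀ y, A *ᵥ y = 0 → ∃ c : ℝ, y = c • w) (hn : 1 < n) :
    0 < sortedEigenvalues A ⟨1, hn⟩ := by
  rw [sortedEigenvalues_eq hA.isHermitian, Function.comp_apply]
  refine (hA.eigenvalues_nonneg _).lt_of_ne fun h => ?_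
  have := (Tuple.sort hA.isHermitian.eigenvalues).injective <|
    hA.isHermitian.eq_of_eigenvalues_eq_zero hker
      (hA.eigenvalues_sort_zero_eq_zero hw hAw (by omega)) h.symm
  simp [Fin.ext_iff] at this

lemma PosSemidef.sortedEigenvalues_one_mul_le (hA : A.PosSemidef) (hw : w ≠ 0)
    (hAw : A *ᵥ w = 0) (hker : ∀ y, A *ᵥ y = 0 → ∃ c : ℝ, y = c • w) (hn : 1 < n)
    {x : Fin n → ℝ} (hx : w ⬝ᵥ x = 0) :
    sortedEigenvalues A ⟨1, hn⟩ * (x ⬝ᵥ x) ≤ x ⬝ᵥ (A *ᵥ x) := by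
  obtain ⟨c, hc⟩ := hA.isHermitian.exists_eigenvectorBasis_eq_smul hker
    (hA.eigenvalues_sort_zero_eq_zero hw hAw (by omega))
  exact hA.isHermitian.sortedEigenvalues_one_mul_le hn
    (by rw [hc, smul_dotProduct, hx, smul_zero])

end Matrix

lemma mul_div_add_mul_sq_sub_le {a b : ℝ} (ha : 0 < a) (hb : 0 < b) (x y : ℝ) :
    a * b / (a + b) * (x - y) ^ 2 ≤ a * x ^ 2 + b * y ^ 2 := by
  rw [div_mul_eq_mul_div, div_le_iff₀ (by positivity)]
  nlinarith [sq_nonneg (a * x + b * y)]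

lemma mul_div_add_mul_sq_sub_le_sum {ι : Type*} [Fintype ι] [DecidableEq ι] {d : ι → ℝ}
    (hd : ∀ i, 0 < d i) {u v : ι} (huv : u ≠ v) (ψ : ι → ℝ) :
    d u * d v / (d u + d v) * (ψ u - ψ v) ^ 2 ≤ ∑ i, d i * ψ i ^ 2 :=
  calc _ ≤ d u * ψ u ^ 2 + d v * ψ v ^ 2 := mul_div_add_mul_sq_sub_le (hd u) (hd v) _ _
    _ = ∑ i ∈ {u, v}, d i * ψ i ^ 2 := (Finset.sum_pair (f := fun i => d i * ψ i ^ 2) huv).symm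
    _ ≤ ∑ i, d i * ψ i ^ 2 := Finset.sum_le_sum_of_subset_of_nonneg (Finset.subset_univ _)
          fun i _ _ => mul_nonneg (hd i).le (sq_nonneg _)

lemma exists_sum_mul_sub_eq_zero {ι : Type*} [Fintype ι] (d φ : ι → ℝ) (hd : ∑ i, d i ≠ 0) :
    ∃ c, ∑ i, d i * (φ i - c) = 0 :=
  ⟨(∑ i, d i * φ i) / ∑ i, d i, by
    simp only [mul_sub, Finset.sum_sub_distrib, ← Finset.sum_mul]
    field_simp
    ring⟩

section Energy

variable {V : Type*} [Fintype V] (G : SimpleGraph V)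

lemma energy_sub_const (φ : V → ℝ) (c : ℝ) : energy G (fun i => φ i - c) = energy G φ := by
  unfold energy
  congr 1
  exact Finset.sum_congr rfl fun i _ => Finset.sum_congr rfl fun j _ => by ring_nf

lemma energy_const_sub (φ : V → ℝ) (c : ℝ) : energy G (fun i => c - φ i) = energy G φ := by
  unfold energy
  congr 1
  exact Finset.sum_congr rfl fun i _ => Finset.sum_congr rfl fun j _ => by ring_nf

lemma deg_pos [Nontrivial V] (hG : G.Preconnected) (v : V) : 0 < deg G v := by
  classical
  unfold deg
  exact_mod_cast hG.degree_pos_of_nontrivial v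

end Energy

section NormLap

variable {n : ℕ} (G : SimpleGraph (Fin n))

lemma energy_eq_dotProduct_lap_mulVec (φ : Fin n → ℝ) : energy G φ = φ ⬝ᵥ (lap G *ᵥ φ) := by
  classical
  rw [lap, ← toLinearMap₂'_apply', SimpleGraph.lapMatrix_toLinearMap₂', energy]
  ring

lemma energy_single (w : Fin n) : energy G (Pi.single w 1) = deg G w := by
  classical
  rw [energy_eq_dotProduct_lap_mulVec, single_dotProduct, one_mul, lap,
    SimpleGraph.lapMatrix_mulVec_apply, deg]
  simp

noncomputable def sqrtDeg : Fin n → ℝ := fun v => √(deg G v)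

lemma sqrtDeg_mul_self (v : Fin n) : sqrtDeg G v * sqrtDeg G v = deg G v :=
  Real.mul_self_sqrt (Nat.cast_nonneg _)

lemma normLap_eq : normLap G = diagonal (sqrtDeg G)⁻¹ * lap G * diagonal (sqrtDeg G)⁻¹ := rfl

lemma normLap_posSemidef : (normLap G).PosSemidef := by
  classical
  have h := (SimpleGraph.posSemidef_lapMatrix ℝ G).conjTranspose_mul_mul_same
    (diagonal (sqrtDeg G)⁻¹)
  rwa [diagonal_conjTranspose, star_trivial] at h

variable {G}

lemma sqrtDeg_pos (hd : ∀ v, 0 < deg G v) (v : Fin n) : 0 < sqrtDeg G v :=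
  Real.sqrt_pos.mpr (hd v)

lemma sqrtDeg_ne_zero (hd : ∀ v, 0 < deg G v) (hG : G.Connected) : sqrtDeg G ≠ 0 := fun h =>
  (sqrtDeg_pos hd hG.nonempty.some).ne' (congrFun h _)

lemma diagonal_inv_sqrtDeg_mulVec_sqrtDeg_mul (hd : ∀ v, 0 < deg G v) (ψ : Fin n → ℝ) :
    diagonal (sqrtDeg G)⁻¹ *ᵥ (sqrtDeg G * ψ) = ψ := by
  ext v
  rw [mulVec_diagonal, Pi.inv_apply, Pi.mul_apply,
    inv_mul_cancel_left₀ (sqrtDeg_pos hd v).ne']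

lemma sqrtDeg_mul_diagonal_inv_sqrtDeg_mulVec (hd : ∀ v, 0 < deg G v) (z : Fin n → ℝ) :
    sqrtDeg G * (diagonal (sqrtDeg G)⁻¹ *ᵥ z) = z := by
  ext v
  rw [Pi.mul_apply, mulVec_diagonal, Pi.inv_apply, mul_inv_cancel_left₀ (sqrtDeg_pos hd v).ne']

lemma sqrtDeg_mul_dotProduct_normLap_mulVec (hd : ∀ v, 0 < deg G v) (ψ : Fin n → ℝ) :
    (sqrtDeg G * ψ) ⬝ᵥ (normLap G *ᵥ (sqrtDeg G * ψ)) = energy G ψ := by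
  rw [normLap_eq, ← mulVec_mulVec, ← mulVec_mulVec, diagonal_inv_sqrtDeg_mulVec_sqrtDeg_mul hd,
    dotProduct_mulVec, ← mulVec_transpose, diagonal_transpose,
    diagonal_inv_sqrtDeg_mulVec_sqrtDeg_mul hd, energy_eq_dotProduct_lap_mulVec]

lemma normLap_mulVec_sqrtDeg (hd : ∀ v, 0 < deg G v) : normLap G *ᵥ sqrtDeg G = 0 := by
  classical
  have h := diagonal_inv_sqrtDeg_mulVec_sqrtDeg_mul hd 1
  rw [mul_one] at h
  rw [normLap_eq, ← mulVec_mulVec, ← mulVec_mulVec, h, lap, Pi.one_def,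
    SimpleGraph.lapMatrix_mulVec_const_eq_zero, mulVec_zero]

lemma exists_eq_smul_sqrtDeg_of_normLap_mulVec_eq_zero (hd : ∀ v, 0 < deg G v)
    (hG : G.Connected) {y : Fin n → ℝ} (hy : normLap G *ᵥ y = 0) :
    ∃ c : ℝ, y = c • sqrtDeg G := by
  classical
  set ψ := diagonal (sqrtDeg G)⁻¹ *ᵥ y
  have hψ : G.lapMatrix ℝ *ᵥ ψ = 0 := by
    rw [normLap_eq, ← mulVec_mulVec, ← mulVec_mulVec, lap] at hy
    rw [← sqrtDeg_mul_diagonal_inv_sqrtDeg_mulVec hd (G.lapMatrix ℝ *ᵥ ψ), hy, mul_zero]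
  have hconst := G.lapMatrix_mulVec_eq_zero_iff_forall_reachable.mp hψ
  obtain ⟨v₀⟩ := hG.nonempty
  refine ⟨ψ v₀, ?_⟩
  rw [← sqrtDeg_mul_diagonal_inv_sqrtDeg_mulVec hd y]
  ext v
  rw [Pi.mul_apply, Pi.smul_apply, smul_eq_mul, mul_comm]
  exact congrArg (· * sqrtDeg G v) (hconst v v₀ (hG.preconnected v v₀))

lemma sortedEigenvalues_normLap_one_pos (hd : ∀ v, 0 < deg G v) (hG : G.Connected)
    (hn : 1 < n) : 0 < sortedEigenvalues (normLap G) ⟨1, hn⟩ :=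
  (normLap_posSemidef G).sortedEigenvalues_one_pos (sqrtDeg_ne_zero hd hG)
    (normLap_mulVec_sqrtDeg hd) (fun _ => exists_eq_smul_sqrtDeg_of_normLap_mulVec_eq_zero hd hG)
    hn

lemma sortedEigenvalues_normLap_mul_sum_le_energy (hd : ∀ v, 0 < deg G v) (hG : G.Connected)
    (hn : 1 < n) {ψ : Fin n → ℝ} (hψ : ∑ v, deg G v * ψ v = 0) :
    sortedEigenvalues (normLap G) ⟨1, hn⟩ * ∑ v, deg G v * ψ v ^ 2 ≤ energy G ψ := by
  have horth : sqrtDeg G ⬝ᵥ (sqrtDeg G * ψ) = 0 := by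
    rw [← hψ]
    exact Finset.sum_congr rfl fun v _ => by rw [Pi.mul_apply, ← mul_assoc, sqrtDeg_mul_self]
  have hnorm : (sqrtDeg G * ψ) ⬝ᵥ (sqrtDeg G * ψ) = ∑ v, deg G v * ψ v ^ 2 :=
    Finset.sum_congr rfl fun v _ => by rw [Pi.mul_apply, ← sqrtDeg_mul_self]; ring
  rw [← hnorm, ← sqrtDeg_mul_dotProduct_normLap_mulVec hd]
  exact (normLap_posSemidef G).sortedEigenvalues_one_mul_le (sqrtDeg_ne_zero hd hG)
    (normLap_mulVec_sqrtDeg hd) (fun _ => exists_eq_smul_sqrtDeg_of_normLap_mulVec_eq_zero hd hG)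
    hn horth

lemma sortedEigenvalues_normLap_mul_le_energy (hd : ∀ v, 0 < deg G v) (hG : G.Connected)
    (hn : 1 < n) {u v : Fin n} (huv : u ≠ v) {φ : Fin n → ℝ} (hφ : φ u - φ v = 1) :
    sortedEigenvalues (normLap G) ⟨1, hn⟩ * (deg G u * deg G v / (deg G u + deg G v)) ≤
      energy G φ := by
  obtain ⟨c, hc⟩ := exists_sum_mul_sub_eq_zero (deg G) φ
    (Finset.sum_pos (fun i _ => hd i) ⟨u, Finset.mem_univ u⟩).ne'
  have hgap := sortedEigenvalues_normLap_one_pos hd hG hn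
  rw [← energy_sub_const G φ c]
  calc _ = sortedEigenvalues (normLap G) ⟨1, hn⟩ *
        (deg G u * deg G v / (deg G u + deg G v) * ((φ u - c) - (φ v - c)) ^ 2) := by
          rw [sub_sub_sub_cancel_right, hφ, one_pow, mul_one]
    _ ≤ sortedEigenvalues (normLap G) ⟨1, hn⟩ * ∑ i, deg G i * (φ i - c) ^ 2 := by
          gcongr
          exact mul_div_add_mul_sq_sub_le_sum hd huv (fun i => φ i - c)
    _ ≤ _ := sortedEigenvalues_normLap_mul_sum_le_energy hd hG hn hc

end NormLap

section EffRes

variable {V : Type*} [Fintype V] {G : SimpleGraph V} {s t : V} {m : ℝ}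

lemma le_sInf_energy (hst : s ≠ t) (h : ∀ φ : V → ℝ, φ s = 1 → φ t = 0 → m ≤ energy G φ) :
    m ≤ sInf (energy G '' {φ | φ s = 1 ∧ φ t = 0}) := by
  classical
  refine le_csInf ⟨_, Pi.single s 1, ⟨by simp, by simp [hst.symm]⟩, rfl⟩ ?_
  rintro _ ⟨φ, ⟨hφs, hφt⟩, rfl⟩
  exact h φ hφs hφt

lemma effRes_le_of_le_energy (hst : s ≠ t) (hm : 0 < m)
    (h : ∀ φ : V → ℝ, φ s = 1 → φ t = 0 → m ≤ energy G φ) : effRes G s t ≤ 1 / m :=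
  one_div_le_one_div_of_le hm (le_sInf_energy hst h)

lemma one_div_energy_le_effRes (hm : 0 < m)
    (h : ∀ φ : V → ℝ, φ s = 1 → φ t = 0 → m ≤ energy G φ) {φ : V → ℝ} (hφs : φ s = 1)
    (hφt : φ t = 0) : 1 / energy G φ ≤ effRes G s t := by
  have hst : s ≠ t := by rintro rfl; simp_all
  refine one_div_le_one_div_of_le (hm.trans_le (le_sInf_energy hst h)) (csInf_le ?_ ?_)
  · exact ⟨m, by rintro _ ⟨ψ, ⟨hψs, hψt⟩, rfl⟩; exact h ψ hψs hψt⟩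
  · exact ⟨φ, ⟨hφs, hφt⟩, rfl⟩

end EffRes

/-- **Degree bounds on effective resistance.**
For a connected graph `G` on `n ≥ 2` vertices and distinct vertices `u, v`,
`(1/2)(1/d(u) + 1/d(v)) ≤ R_G(u,v) ≤ (1/λ₂(L̃_G)) (1/d(u) + 1/d(v))`,
where `λ₂(L̃_G)` is the second-smallest eigenvalue of the normalized Laplacian. -/
theorem effRes_degree_bounds
    (n : ℕ) (hn : 2 ≤ n) (G : SimpleGraph (Fin n)) (hG : G.Connected)
    (u v : Fin n) (huv : u ≠ v) :
    (1/2) * (1 / deg G u + 1 / deg G v) ≤ effRes G u v ∧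
      effRes G u v ≤
        (1 / sortedEigenvalues (normLap G) ⟨1, by omega⟩) * (1 / deg G u + 1 / deg G v) := by
  have : Nontrivial (Fin n) := ⟨⟨u, v, huv⟩⟩
  have hd : ∀ w, 0 < deg G w := deg_pos G hG.preconnected
  have hgap := sortedEigenvalues_normLap_one_pos hd hG (by omega)
  have hdu := hd u
  have hdv := hd v
  have hm : 0 < sortedEigenvalues (normLap G) ⟨1, by omega⟩ *
      (deg G u * deg G v / (deg G u + deg G v)) := by positivity
  have hlow (φ : Fin n → ℝ) (hφu : φ u = 1) (hφv : φ v = 0) :=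
    sortedEigenvalues_normLap_mul_le_energy hd hG (by omega) huv (φ := φ)
      (by rw [hφu, hφv, sub_zero])
  refine ⟨?_, ?_⟩
  · have hu := one_div_energy_le_effRes hm hlow (φ := Pi.single u 1) (by simp)
      (by simp [huv.symm])
    have hv := one_div_energy_le_effRes hm hlow
      (φ := fun i => 1 - (Pi.single v 1 : Fin n → ℝ) i) (by simp [huv]) (by simp)
    rw [energy_single] at hu
    rw [energy_const_sub, energy_single] at hv
    linarith
  · calc effRes G u v ≤ 1 / (sortedEigenvalues (normLap G) ⟨1, by omega⟩ *
          (deg G u * deg G v / (deg G u + deg G v))) := effRes_le_of_le_energy huv hm hlow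
      _ = _ := by
          field_simp
          ring
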